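/- Let G be a DAG with leaf set X and the k-lca-property. Then the map R_G(U) = 𝒞(lca(U)) on nonempty subsets U of X of size at most k is monotone: if W ⊆ R_G(U) with 1 ≤ |W| ≤ k, then R_G(W) ⊆ R_G(U). -/

import Mathlib

/-! Among the common ancestors of `W` that lie below `lca(U)` there is a `⪯`-minimal one (the DAG is
finite and acyclic); it is a least common ancestor of `W`, so by uniqueness it is `lca(W)`. Hence
`lca(W) ⪯ lca(U)` and the clusters are nested. -/


namespace Dag

variable {V : Type*}

/-- Reachability order of a digraph: `v ⪯ w` iff there is a directed path from `w` to `v`. -/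
def reach (adj : V → V → Prop) (v w : V) : Prop :=
  Relation.ReflTransGen (fun a b => adj b a) v w

/-- The digraph is acyclic: its reachability relation is antisymmetric. -/
def acyclic (adj : V → V → Prop) : Prop :=
  ∀ v w, reach adj v w → reach adj w v → v = w

/-- A leaf is a `⪯`-minimal vertex. -/
def leaf (adj : V → V → Prop) (x : V) : Prop :=
  ∀ v, reach adj v x → v = x

/-- The set of leaves of the digraph. -/
def leaves (adj : V → V → Prop) : Set V := {x | leaf adj x}

/-- The cluster of `v`: all leaves that are descendants of `v`. -/
def cluster (adj : V → V → Prop) (v : V) : Set V :=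
  {x | leaf adj x ∧ reach adj x v}

/-- The clustering system of the digraph. -/
def clusters (adj : V → V → Prop) : Set (Set V) := {C | ∃ v, C = cluster adj v}

/-- `w` is a least common ancestor of `A`: a `⪯`-minimal common ancestor of `A`. -/
def isLCA (adj : V → V → Prop) (A : Set V) (w : V) : Prop :=
  (∀ a ∈ A, reach adj a w) ∧ ∀ u, (∀ a ∈ A, reach adj a u) → reach adj u w → u = w

/-- `A` has a unique least common ancestor. -/
def hasUniqueLCA (adj : V → V → Prop) (A : Set V) : Prop := ∃! w, isLCA adj A w

end Dag

namespace Dag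

variable {V : Type*} {adj : V → V → Prop}

theorem cluster_subset_cluster_of_reach {v w : V} (h : reach adj v w) :
    cluster adj v ⊆ cluster adj w :=
  fun _ ⟨hleaf, hxv⟩ => ⟨hleaf, hxv.trans h⟩

theorem wellFounded_strictReach [Finite V] (hacy : acyclic adj) :
    WellFounded (fun a b => reach adj a b ∧ a ≠ b) := by
  have : IsTrans V (fun a b => reach adj a b ∧ a ≠ b) :=
    ⟨fun a b _ ⟨hab, hne⟩ ⟨hbc, _⟩ =>
      ⟨hab.trans hbc, by rintro rfl; exact hne (hacy a b hab hbc)⟩⟩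
  have : Std.Irrefl (fun a b : V => reach adj a b ∧ a ≠ b) := ⟨fun _ h => h.2 rfl⟩
  exact Finite.wellFounded_of_trans_of_irrefl _

theorem exists_isLCA_reach [Finite V] (hacy : acyclic adj) {A : Set V} {v : V}
    (hv : ∀ a ∈ A, reach adj a v) : ∃ w, isLCA adj A w ∧ reach adj w v := by
  let S : Set V := {u | (∀ a ∈ A, reach adj a u) ∧ reach adj u v}
  obtain ⟨m, ⟨hmA, hmv⟩, hmin⟩ :=
    (wellFounded_strictReach hacy).has_min S ⟨v, hv, Relation.ReflTransGen.refl⟩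
  refine ⟨m, ⟨hmA, fun u huA hum => ?_⟩, hmv⟩
  by_contra hne
  exact hmin u ⟨huA, hum.trans hmv⟩ ⟨hum, hne⟩

theorem reach_of_hasUniqueLCA [Finite V] (hacy : acyclic adj) {A : Set V}
    (huniq : hasUniqueLCA adj A) {w v : V} (hw : isLCA adj A w)
    (hv : ∀ a ∈ A, reach adj a v) : reach adj w v := by
  obtain ⟨m, hm, hmv⟩ := exists_isLCA_reach hacy hv
  exact huniq.unique hm hw ▸ hmv

end Dag

/-- In a DAG with the `k`-lca-property, the map `U ↦ 𝒞(lca(U))` is monotone. -/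
theorem stmt8 {V : Type*} [Fintype V] (k : ℕ) (adj : V → V → Prop) (hacy : Dag.acyclic adj)
    (hklca : ∀ A : Set V, A ⊆ Dag.leaves adj → A.Nonempty → A.ncard ≤ k →
      Dag.hasUniqueLCA adj A) :
    ∀ U W : Set V, U ⊆ Dag.leaves adj → U.Nonempty → U.ncard ≤ k →
      W.Nonempty → W.ncard ≤ k →
      ∀ wU : V, Dag.isLCA adj U wU → W ⊆ Dag.cluster adj wU →
        ∀ wW : V, Dag.isLCA adj W wW →
          Dag.cluster adj wW ⊆ Dag.cluster adj wU := by
  intro U W _ _ _ hWne hWk wU _ hWsub wW hlcaW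
  have hWleaves : W ⊆ Dag.leaves adj := fun _ hx => (hWsub hx).1
  apply Dag.cluster_subset_cluster_of_reach
  exact Dag.reach_of_hasUniqueLCA hacy (hklca W hWleaves hWne hWk) hlcaW
    fun _ ha => (hWsub ha).2
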